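/- For every integer n ≥ 1 and every 1 ≤ k ≤ n, the word i^k is a reduced word for the longest element w_0 of S_{n+1}: the product of the adjacent transpositions along i^k equals the order-reversing permutation w_0, and the length of the word i^k equals n(n+1)/2, the number of inversions of w_0. -/

import Mathlib

/-- The adjacent transposition `s_i` swapping `i` and `i+1` (as a permutation of `ℕ`,
with 1-based conventions: the relevant generators are `s_1, …, s_n`). -/
def sw (i : ℕ) : Equiv.Perm ℕ := Equiv.swap i (i + 1)

/-- The product `s_{i_1} ⋯ s_{i_r}` of the adjacent transpositions along a word. -/
def wordProd (w : List ℕ) : Equiv.Perm ℕ := (w.map sw).prod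

/-- The longest element `w_0` of `S_{n+1}`: the order-reversing permutation
`i ↦ n+2−i` of `{1,…,n+1}` (extended by the identity outside). -/
def w0 (n : ℕ) : Equiv.Perm ℕ :=
  Function.Involutive.toPerm (fun i => if 1 ≤ i ∧ i ≤ n + 1 then n + 2 - i else i)
    (by intro i; dsimp only; split_ifs <;> omega)

/-- The number of inversions of a permutation of `{1,…,n+1}`. -/
def inversions (n : ℕ) (w : Equiv.Perm ℕ) : ℕ :=
  ((Finset.Icc 1 (n + 1) ×ˢ Finset.Icc 1 (n + 1)).filter
    (fun p => p.1 < p.2 ∧ w p.2 < w p.1)).card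

/-- Part (A) of the word `i^k`: the word
`(k,k−1,…,1, k+1,k,…,2, …, n,n−1,…,n−k+1)` of the permutation `w_{k,n}`. -/
def wordA (n k : ℕ) : List ℕ :=
  ((List.range (n - k + 1)).map (fun m => (List.range k).map (fun t => k + m - t))).flatten

/-- Part (B) of the word `i^k`: the word
`(n,n−1,…,n−k+2, n,n−1,…,n−k+3, …, n,n−1, n)` of the permutation `S_{n−(k−1)+[k−1]}`. -/
def wordB (n k : ℕ) : List ℕ :=
  ((List.range (k - 1)).map (fun b => (List.range (k - 1 - b)).map (fun t => n - t))).flatten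

/-- Part (C) of the word `i^k`: the word
`(1,2,…,n−k, 1,2,…,n−k−1, …, 1,2, 1)` of the permutation `S_{[n−k]}`. -/
def wordC (n k : ℕ) : List ℕ :=
  ((List.range (n - k)).map (fun b => (List.range (n - k - b)).map (fun t => t + 1))).flatten

/-- The reduced word `i^k` for the longest element `w_0`. -/
def ik (n k : ℕ) : List ℕ := wordA n k ++ wordB n k ++ wordC n k

/-!
A descending run `s_t s_{t-1} ⋯ s_{t-ℓ+1}` acts on `ℕ` as a cyclic shift of
`{t-ℓ+1, …, t+1}`, and an ascending run `s_1 ⋯ s_ℓ` as a cyclic shift of `{1, …, ℓ+1}`.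
Each block of `i^k` is a sequence of such runs, so induction on the number of runs gives its
action as an explicit piecewise-linear map: (C) reverses `{1, …, n-k+1}`, (B) reverses
`{n-k+2, …, n+1}`, and (A) exchanges these two intervals keeping the order inside each.
The composite is `i ↦ n+2-i`. The block lengths are `(n-k+1)k` and two triangular numbers,
adding up to `n(n+1)/2`, which is also the number of pairs `a < b` in `{1, …, n+1}`, all of
them inverted by `w_0`.
-/

open Finset

def descRun (len top : ℕ) : List ℕ := (List.range len).map (top - ·)

def ascRun (len : ℕ) : List ℕ := (List.range len).map (· + 1)

lemma wordA_eq (n k : ℕ) :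
    wordA n k = ((List.range (n - k + 1)).map fun m => descRun k (k + m)).flatten := rfl

lemma wordB_eq (n k : ℕ) :
    wordB n k = ((List.range (k - 1)).map fun b => descRun (k - 1 - b) n).flatten := rfl

lemma wordC_eq (n k : ℕ) :
    wordC n k = ((List.range (n - k)).map fun b => ascRun (n - k - b)).flatten := rfl

@[simp] lemma wordProd_nil : wordProd [] = 1 := rfl

@[simp] lemma wordProd_cons (a : ℕ) (l : List ℕ) : wordProd (a :: l) = sw a * wordProd l := by
  simp [wordProd]

@[simp] lemma wordProd_append (l₁ l₂ : List ℕ) :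
    wordProd (l₁ ++ l₂) = wordProd l₁ * wordProd l₂ := by
  simp [wordProd]

lemma wordProd_flatten_range_succ (f : ℕ → List ℕ) (r : ℕ) :
    wordProd ((List.range (r + 1)).map f).flatten =
      wordProd ((List.range r).map f).flatten * wordProd (f r) := by
  simp [List.range_succ]

lemma sw_apply (i x : ℕ) : sw i x = if x = i then i + 1 else if x = i + 1 then i else x := by
  simp [sw, Equiv.swap_apply_def]

lemma w0_apply (n x : ℕ) : w0 n x = if 1 ≤ x ∧ x ≤ n + 1 then n + 2 - x else x := rfl

lemma wordProd_descRun_apply (len top : ℕ) (h : len ≤ top) (x : ℕ) :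
    wordProd (descRun len top) x =
      if x = top + 1 - len then top + 1
      else if top + 1 - len < x ∧ x ≤ top + 1 then x - 1 else x := by
  induction len generalizing top with
  | zero =>
    simp only [descRun, List.range_zero, List.map_nil, wordProd_nil, Equiv.Perm.one_apply]
    split_ifs <;> omega
  | succ len ih =>
    have hrun : descRun (len + 1) top = top :: descRun len (top - 1) := by
      simp only [descRun, List.range_succ_eq_map, List.map_cons, List.map_map, Nat.sub_zero]
      congr 1
      exact List.map_congr_left fun t _ => by simp only [Function.comp_apply]; omega
    rw [hrun, wordProd_cons, Equiv.Perm.mul_apply, ih (top - 1) (by omega), sw_apply]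
    split_ifs <;> omega

lemma wordProd_ascRun_apply (len x : ℕ) :
    wordProd (ascRun len) x =
      if x = len + 1 then 1 else if 1 ≤ x ∧ x ≤ len then x + 1 else x := by
  induction len generalizing x with
  | zero =>
    simp only [ascRun, List.range_zero, List.map_nil, wordProd_nil, Equiv.Perm.one_apply]
    split_ifs <;> omega
  | succ len ih =>
    simp only [ascRun, List.range_succ, List.map_append, List.map_cons, List.map_nil,
      wordProd_append, wordProd_cons, wordProd_nil, mul_one, Equiv.Perm.mul_apply] at ih ⊢
    rw [sw_apply, ih]
    split_ifs <;> omega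

lemma wordProd_shiftedDescRuns_apply (k r x : ℕ) :
    wordProd ((List.range r).map fun m => descRun k (k + m)).flatten x =
      if 1 ≤ x ∧ x ≤ r then x + k else if r + 1 ≤ x ∧ x ≤ r + k then x - r else x := by
  induction r generalizing x with
  | zero =>
    simp only [List.range_zero, List.map_nil, List.flatten_nil, wordProd_nil,
      Equiv.Perm.one_apply]
    split_ifs <;> omega
  | succ r ih =>
    rw [wordProd_flatten_range_succ, Equiv.Perm.mul_apply,
      wordProd_descRun_apply k (k + r) (by omega), ih]
    split_ifs <;> omega

lemma wordProd_shrinkingDescRuns_apply (n c r : ℕ) (hc : c ≤ n) (hr : r ≤ c) (x : ℕ) :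
    wordProd ((List.range r).map fun b => descRun (c - b) n).flatten x =
      if n - c + 1 ≤ x ∧ x ≤ n - c + r then 2 * n + 2 - c - x
      else if n - c + r + 1 ≤ x ∧ x ≤ n + 1 then x - r else x := by
  induction r generalizing x with
  | zero =>
    simp only [List.range_zero, List.map_nil, List.flatten_nil, wordProd_nil,
      Equiv.Perm.one_apply]
    split_ifs <;> omega
  | succ r ih =>
    rw [wordProd_flatten_range_succ, Equiv.Perm.mul_apply,
      wordProd_descRun_apply (c - r) n (by omega), ih (by omega)]
    split_ifs <;> omega

lemma wordProd_shrinkingAscRuns_apply (m r : ℕ) (hr : r ≤ m) (x : ℕ) :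
    wordProd ((List.range r).map fun b => ascRun (m - b)).flatten x =
      if 1 ≤ x ∧ x ≤ m + 1 - r then x + r
      else if m + 2 - r ≤ x ∧ x ≤ m + 1 then m + 2 - x else x := by
  induction r generalizing x with
  | zero =>
    simp only [List.range_zero, List.map_nil, List.flatten_nil, wordProd_nil,
      Equiv.Perm.one_apply]
    split_ifs <;> omega
  | succ r ih =>
    rw [wordProd_flatten_range_succ, Equiv.Perm.mul_apply, wordProd_ascRun_apply, ih (by omega)]
    split_ifs <;> omega

theorem wordProd_ik {n k : ℕ} (hkn : k ≤ n) : wordProd (ik n k) = w0 n := by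
  ext x
  rw [ik, wordProd_append, wordProd_append, Equiv.Perm.mul_apply, Equiv.Perm.mul_apply,
    wordA_eq, wordB_eq, wordC_eq, wordProd_shrinkingAscRuns_apply (n - k) (n - k) le_rfl,
    wordProd_shrinkingDescRuns_apply n (k - 1) (k - 1) (by omega) le_rfl,
    wordProd_shiftedDescRuns_apply, w0_apply]
  split_ifs <;> omega

lemma sum_range_sub_mul_two (c : ℕ) : (∑ b ∈ range c, (c - b)) * 2 = c * (c + 1) := by
  induction c with
  | zero => rfl
  | succ c ih =>
    rw [sum_range_succ']
    simp only [Nat.add_sub_add_right, Nat.sub_zero, add_mul, ih]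
    ring

lemma length_flatten_map_range (f : ℕ → List ℕ) (r : ℕ) :
    ((List.range r).map f).flatten.length = ∑ i ∈ range r, (f i).length := by
  induction r with
  | zero => rfl
  | succ r ih => simp [List.range_succ, sum_range_succ, ih]

theorem length_ik {n k : ℕ} (hkn : k ≤ n) : (ik n k).length = n * (n + 1) / 2 := by
  have hA : (wordA n k).length = (n - k + 1) * k := by
    rw [wordA_eq, length_flatten_map_range]
    simp [descRun]
  have hB : (wordB n k).length * 2 = (k - 1) * (k - 1 + 1) := by
    rw [wordB_eq, length_flatten_map_range, ← sum_range_sub_mul_two]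
    simp [descRun]
  have hC : (wordC n k).length * 2 = (n - k) * (n - k + 1) := by
    rw [wordC_eq, length_flatten_map_range, ← sum_range_sub_mul_two]
    simp [ascRun]
  refine (Nat.div_eq_of_eq_mul_left two_pos ?_).symm
  obtain ⟨m, rfl⟩ : ∃ m, n = k + m := ⟨n - k, by omega⟩
  simp only [ik, List.length_append, add_mul, hA, hB, hC, Nat.add_sub_cancel_left]
  rcases k with _ | k
  · ring
  · simp only [Nat.add_sub_cancel]
    ring

theorem inversions_w0 (n : ℕ) : inversions n (w0 n) = n * (n + 1) / 2 := by
  have hfibres : inversions n (w0 n) = ∑ a ∈ range n, (n - a) := by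
    rw [inversions, card_eq_sum_card_fiberwise (f := fun p => p.1 - 1) (t := range n)]
    · refine sum_congr rfl fun a _ => ?_
      have hfibre :
          {p ∈ {p ∈ Icc 1 (n + 1) ×ˢ Icc 1 (n + 1) | p.1 < p.2 ∧ w0 n p.2 < w0 n p.1} |
            p.1 - 1 = a} = {a + 1} ×ˢ Icc (a + 2) (n + 1) := by
        ext ⟨x, y⟩
        rw [mem_filter, mem_filter]
        simp only [mem_product, mem_Icc, mem_singleton, w0_apply]
        split_ifs <;> omega
      rw [hfibre, card_product, card_singleton, Nat.card_Icc]
      omega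
    · intro p hp
      simp only [coe_filter, mem_product, mem_Icc, Set.mem_ofPred_eq] at hp
      simp only [coe_range, Set.mem_Iio]
      omega
  rw [hfibres, ← sum_range_sub_mul_two n, Nat.mul_div_cancel _ two_pos]

theorem ik_reduced_word_for_w0_general (n k : ℕ) (hkn : k ≤ n) :
    wordProd (ik n k) = w0 n ∧
    (ik n k).length = n * (n + 1) / 2 ∧
    inversions n (w0 n) = n * (n + 1) / 2 :=
  ⟨wordProd_ik hkn, length_ik hkn, inversions_w0 n⟩

/-- `i^k` is a reduced word for the longest element `w_0` of `S_{n+1}`: the product of the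
adjacent transpositions along `i^k` is `w_0`, and the length of `i^k` is `n(n+1)/2`, the
number of inversions of `w_0`. -/
theorem ik_reduced_word_for_w0 (n k : ℕ) (hn : 1 ≤ n) (hk1 : 1 ≤ k) (hkn : k ≤ n) :
    wordProd (ik n k) = w0 n ∧
    (ik n k).length = n * (n + 1) / 2 ∧
    inversions n (w0 n) = n * (n + 1) / 2 :=
  ik_reduced_word_for_w0_general n k hkn
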